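/- arXiv:1004.1500 — 2 statements merged into one kernel-verified Lean document; each statement's English description precedes it below -/
import Mathlib

section
/- Let M be an n×n M-matrix and Z an n×n Z-matrix with Z ≥ M entrywise. If either (i) M is nonsingular, or (ii) M is irreducible and Z ≠ M, then Z is a nonsingular M-matrix. -/
/-!
Write `M = s • 1 - P` with `P ≥ 0`, `ρ(P) ≤ s`, and `Z = t • 1 - Q` with `Q ≥ 0`. For `ε > 0` the
matrix `M + ε • 1` has a nonnegative inverse: after rescaling, this is the Neumann series of a
nonnegative matrix of spectral radius `< 1`, which converges once a suitable power has norm `< 1`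
(Gelfand's formula). Letting `ε → 0`, the same holds for `M` when `M` is invertible. So a vector
`w ≥ 0` with `(M + ε • 1) w ≤ 0`, resp. `M w ≤ 0` for invertible `M`, vanishes.

If `Q v = μ v`, then `w = |v|` satisfies `M w ≤ Z w ≤ (t - |μ|) w`, whence `|μ| ≤ t`, and `Z` is an
M-matrix. If `Z` were singular, `μ = t` would give `w ≥ 0`, `w ≠ 0` with `M w ≤ Z w ≤ 0`,
impossible for invertible `M`. For irreducible `M`, some power `(1 + P) ^ m` is entrywise positive
and commutes with `M`; this forces `M w = 0` and `w > 0`, so `(Z - M) w = 0` with `Z - M ≥ 0`,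
i.e. `Z = M`.
-/

open Matrix

/-- The spectral radius of a real square matrix: the supremum of the norms of
its complex eigenvalues. -/
noncomputable def specRad {n : ℕ} (A : Matrix (Fin n) (Fin n) ℝ) : ℝ :=
  sSup {r : ℝ | ∃ μ ∈ spectrum ℂ (A.map (Complex.ofReal)), ‖μ‖ = r}

/-- A real square matrix is a Z-matrix if its off-diagonal entries are nonpositive. -/
def IsZMat {n : ℕ} (A : Matrix (Fin n) (Fin n) ℝ) : Prop :=
  ∀ i j, i ≠ j → A i j ≤ 0

/-- An M-matrix: a matrix of the form `s • 1 - P` with `P ≥ 0` and `ρ(P) ≤ s`. -/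
def IsMMat {n : ℕ} (A : Matrix (Fin n) (Fin n) ℝ) : Prop :=
  ∃ (s : ℝ) (P : Matrix (Fin n) (Fin n) ℝ),
    (∀ i j, 0 ≤ P i j) ∧ specRad P ≤ s ∧ A = s • (1 : Matrix (Fin n) (Fin n) ℝ) - P

/-- A nonsingular M-matrix: an M-matrix that is invertible. -/
def IsNsMMat {n : ℕ} (A : Matrix (Fin n) (Fin n) ℝ) : Prop :=
  IsMMat A ∧ IsUnit A.det

/-- A square matrix is irreducible if the directed graph on the indices, with an edge
from `i` to `j` whenever `A i j ≠ 0`, is strongly connected. -/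
def IsIrred {n : ℕ} (A : Matrix (Fin n) (Fin n) ℝ) : Prop :=
  ∀ i j : Fin n, i ≠ j → Relation.TransGen (fun p q => A p q ≠ 0) i j

open Filter Topology

section SpectralRadius

variable {n : ℕ}

lemma norm_le_specRad {A : Matrix (Fin n) (Fin n) ℝ} {μ : ℂ}
    (h : μ ∈ spectrum ℂ (A.map Complex.ofReal)) : ‖μ‖ ≤ specRad A :=
  le_csSup ((Matrix.finite_spectrum _).image norm).bddAbove ⟨μ, h, rfl⟩

lemma specRad_le {A : Matrix (Fin n) (Fin n) ℝ} {t : ℝ} (ht : 0 ≤ t)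
    (h : ∀ μ ∈ spectrum ℂ (A.map Complex.ofReal), ‖μ‖ ≤ t) : specRad A ≤ t :=
  Real.sSup_le (by rintro r ⟨μ, hμ, rfl⟩; exact h μ hμ) ht

lemma specRad_nonneg (A : Matrix (Fin n) (Fin n) ℝ) : 0 ≤ specRad A :=
  Real.sSup_nonneg (by rintro r ⟨μ, -, rfl⟩; exact norm_nonneg μ)

end SpectralRadius

section Eigenvectors

variable {ι : Type*} [Fintype ι] [DecidableEq ι]

lemma exists_mulVec_eq_smul_of_mem_spectrum {B : Matrix ι ι ℂ} {μ : ℂ}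
    (hμ : μ ∈ spectrum ℂ B) : ∃ v, v ≠ 0 ∧ B *ᵥ v = μ • v := by
  rw [spectrum.mem_iff, Algebra.algebraMap_eq_smul_one, isUnit_iff_isUnit_det,
    isUnit_iff_ne_zero, not_not, ← exists_mulVec_eq_zero_iff] at hμ
  obtain ⟨v, hv, he⟩ := hμ
  refine ⟨v, hv, ?_⟩
  rwa [sub_mulVec, smul_mulVec, one_mulVec, sub_eq_zero, eq_comm] at he

lemma ofReal_mem_spectrum_of_not_isUnit_det {Q : Matrix ι ι ℝ} {t : ℝ}
    (h : ¬IsUnit (t • (1 : Matrix ι ι ℝ) - Q).det) :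
    (t : ℂ) ∈ spectrum ℂ (Q.map Complex.ofReal) := by
  have hmap : (t • (1 : Matrix ι ι ℝ) - Q).map Complex.ofReal
      = algebraMap ℂ (Matrix ι ι ℂ) t - Q.map Complex.ofReal := by
    ext i j
    simp [one_apply, algebraMap_matrix_apply, apply_ite]
  have hdet : ((t • (1 : Matrix ι ι ℝ) - Q).map Complex.ofReal).det
      = ((t • (1 : Matrix ι ι ℝ) - Q).det : ℂ) :=
    (RingHom.map_det Complex.ofRealHom _).symm
  rw [spectrum.mem_iff, ← hmap, isUnit_iff_isUnit_det, hdet]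
  simpa [isUnit_iff_ne_zero] using h

lemma smul_one_sub_mulVec_norm_le {Q : Matrix ι ι ℝ} (hQ : ∀ i j, 0 ≤ Q i j) (t : ℝ) {μ : ℂ}
    {v : ι → ℂ} (hv : Q.map Complex.ofReal *ᵥ v = μ • v) (i : ι) :
    ((t • (1 : Matrix ι ι ℝ) - Q) *ᵥ fun j => ‖v j‖) i ≤ (t - ‖μ‖) * ‖v i‖ := by
  have hle : ‖μ‖ * ‖v i‖ ≤ (Q *ᵥ fun j => ‖v j‖) i :=
    calc ‖μ‖ * ‖v i‖ = ‖∑ j, (Q i j : ℂ) * v j‖ := by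
          rw [← norm_mul, ← smul_eq_mul, ← Pi.smul_apply, ← hv]; rfl
      _ ≤ ∑ j, ‖(Q i j : ℂ) * v j‖ := norm_sum_le _ _
      _ = (Q *ᵥ fun j => ‖v j‖) i := by
          simp [mulVec, dotProduct, abs_of_nonneg (hQ i _)]
  rw [sub_mulVec, smul_mulVec, one_mulVec, Pi.sub_apply, Pi.smul_apply, smul_eq_mul]
  linarith

end Eigenvectors

section InverseNonneg

variable {ι : Type*} [Fintype ι] [DecidableEq ι]

def IsInvNonneg (A : Matrix ι ι ℝ) : Prop :=
  IsUnit A.det ∧ ∀ i j, 0 ≤ A⁻¹ i j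

lemma IsInvNonneg.eq_zero_of_mulVec_nonpos {A : Matrix ι ι ℝ} (hA : IsInvNonneg A)
    {w : ι → ℝ} (hw : ∀ i, 0 ≤ w i) (hAw : ∀ i, (A *ᵥ w) i ≤ 0) : w = 0 := by
  funext i
  refine le_antisymm ?_ (hw i)
  calc w i = (A⁻¹ *ᵥ (A *ᵥ w)) i := by rw [mulVec_mulVec, nonsing_inv_mul _ hA.1, one_mulVec]
    _ ≤ 0 := Finset.sum_nonpos fun j _ => mul_nonpos_of_nonneg_of_nonpos (hA.2 i j) (hAw j)

lemma IsInvNonneg.smul {A : Matrix ι ι ℝ} (hA : IsInvNonneg A) {c : ℝ} (hc : 0 < c) :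
    IsInvNonneg (c • A) := by
  refine ⟨by rw [det_smul]; exact (hc.ne'.isUnit.pow _).mul hA.1, fun i j => ?_⟩
  have hinv : (c • A)⁻¹ = c⁻¹ • A⁻¹ := inv_eq_left_inv (by
    rw [smul_mul_smul_comm, inv_mul_cancel₀ hc.ne', one_smul, nonsing_inv_mul _ hA.1])
  rw [hinv]
  exact mul_nonneg (inv_nonneg.2 hc.le) (hA.2 i j)

section LinftyNorm

attribute [local instance] Matrix.linftyOpNormedRing Matrix.linftyOpNormedAlgebra

lemma exists_summable_pow_pow {P : Matrix ι ι ℝ}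
    (hσ : ∀ μ ∈ spectrum ℂ (P.map Complex.ofReal), ‖μ‖ < 1) :
    ∃ N, Summable fun k => (P ^ N) ^ k := by
  rcases isEmpty_or_nonempty ι with hι | hι
  · exact ⟨0, summable_geometric_of_norm_lt_one (by
      rw [Subsingleton.elim (P ^ 0) 0, norm_zero]; exact one_pos)⟩
  have hρ : spectralRadius ℂ (P.map Complex.ofReal) < 1 := by
    simpa using spectrum.spectralRadius_lt_of_forall_lt (P.map Complex.ofReal) (r := 1)
      fun μ hμ => by simpa [← NNReal.coe_lt_coe] using hσ μ hμ
  -- Gelfand's formula for the complexified matrix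
  obtain ⟨N, hN, hN1⟩ :=
    (((spectrum.pow_norm_pow_one_div_tendsto_nhds_spectralRadius _).eventually_lt_const
      hρ).and (eventually_ge_atTop 1)).exists
  refine ⟨N, summable_geometric_of_norm_lt_one ?_⟩
  have hnorm : ‖P ^ N‖ = ‖P.map Complex.ofReal ^ N‖ := by
    rw [← show (P ^ N).map Complex.ofReal = P.map Complex.ofReal ^ N from
      Matrix.map_pow P Complex.ofRealHom N]
    simp [linfty_opNorm_def]
  rw [ENNReal.ofReal_lt_one, Real.rpow_lt_one_iff' (norm_nonneg _) (by positivity)] at hN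
  rwa [hnorm]

end LinftyNorm

lemma isInvNonneg_one_sub {P : Matrix ι ι ℝ} (hP : ∀ i j, 0 ≤ P i j)
    (hσ : ∀ μ ∈ spectrum ℂ (P.map Complex.ofReal), ‖μ‖ < 1) : IsInvNonneg (1 - P) := by
  obtain ⟨N, hsum⟩ := exists_summable_pow_pow hσ
  -- `∑ k < N, P ^ k` turns the Neumann series of `P ^ N` into an inverse of `1 - P`
  have hinv : (1 - P) * ((∑ k ∈ Finset.range N, P ^ k) * ∑' k, (P ^ N) ^ k) = 1 := by
    rw [← mul_assoc, mul_neg_geom_sum, hsum.one_sub_mul_tsum_pow]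
  have hS : ∀ i j, 0 ≤ (∑ k ∈ Finset.range N, P ^ k) i j := fun i j => by
    rw [Matrix.sum_apply]
    exact Finset.sum_nonneg fun k _ => pow_apply_nonneg hP k i j
  have hT : ∀ i j, 0 ≤ (∑' k, (P ^ N) ^ k) i j := fun i j => by
    have hsum' : Summable fun k => ((P ^ N) ^ k : ι → ι → ℝ) := hsum
    change 0 ≤ (∑' k, ((P ^ N) ^ k : ι → ι → ℝ)) i j
    rw [tsum_apply hsum', tsum_apply (Pi.summable.1 hsum' i)]
    exact tsum_nonneg fun k => pow_apply_nonneg (pow_apply_nonneg hP N) k i j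
  refine ⟨isUnit_det_of_right_inverse hinv, fun i j => ?_⟩
  rw [inv_eq_right_inv hinv]
  exact Finset.sum_nonneg fun k _ => mul_nonneg (hS i k) (hT k j)

lemma isInvNonneg_smul_one_sub {P : Matrix ι ι ℝ} (hP : ∀ i j, 0 ≤ P i j) {x : ℝ} (hx : 0 < x)
    (hσ : ∀ μ ∈ spectrum ℂ (P.map Complex.ofReal), ‖μ‖ < x) :
    IsInvNonneg (x • (1 : Matrix ι ι ℝ) - P) := by
  have hscale : x • (1 : Matrix ι ι ℝ) - P = x • (1 - x⁻¹ • P) := by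
    rw [smul_sub, smul_smul, mul_inv_cancel₀ hx.ne', one_smul]
  have hP' : ∀ i j, 0 ≤ (x⁻¹ • P) i j := fun i j => mul_nonneg (inv_nonneg.2 hx.le) (hP i j)
  have hσ' : ∀ μ ∈ spectrum ℂ ((x⁻¹ • P).map Complex.ofReal), ‖μ‖ < 1 := by
    have hmap : (x⁻¹ • P).map Complex.ofReal
        = Units.mk0 (x⁻¹ : ℂ) (by simp [hx.ne']) • P.map Complex.ofReal := by
      ext i j; simp
    intro μ hμ
    rw [hmap, spectrum.unit_smul_eq_smul] at hμ
    obtain ⟨ν, hν, rfl⟩ := hμ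
    simpa [norm_smul, abs_of_pos hx, inv_mul_lt_one₀ hx] using hσ ν hν
  rw [hscale]
  exact (isInvNonneg_one_sub hP' hσ').smul hx

end InverseNonneg

section Positivity

variable {ι : Type*} [Fintype ι]

lemma mulVec_le_mulVec_of_le {A B : Matrix ι ι ℝ} (hAB : ∀ i j, A i j ≤ B i j) {w : ι → ℝ}
    (hw : ∀ i, 0 ≤ w i) (i : ι) : (A *ᵥ w) i ≤ (B *ᵥ w) i :=
  Finset.sum_le_sum fun j _ => mul_le_mul_of_nonneg_right (hAB i j) (hw j)

lemma eq_of_le_of_mulVec_eq {A B : Matrix ι ι ℝ} (hAB : ∀ i j, A i j ≤ B i j) {w : ι → ℝ}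
    (hw : ∀ i, 0 < w i) (h : A *ᵥ w = B *ᵥ w) : A = B := by
  ext i j
  have hsum : ∑ k, (B i k - A i k) * w k = 0 := by
    simp only [sub_mul, Finset.sum_sub_distrib]
    exact sub_eq_zero.2 (congrFun h i).symm
  have := (Finset.sum_eq_zero_iff_of_nonneg fun k _ =>
    mul_nonneg (sub_nonneg.2 (hAB i k)) (hw k).le).1 hsum j (Finset.mem_univ j)
  nlinarith [(mul_eq_zero.1 this).resolve_right (hw j).ne']

lemma mulVec_pos_of_pos {B : Matrix ι ι ℝ} (hB : ∀ i j, 0 < B i j) {w : ι → ℝ}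
    (hw : ∀ i, 0 ≤ w i) (hw0 : w ≠ 0) (i : ι) : 0 < (B *ᵥ w) i := by
  obtain ⟨j, hj⟩ := Function.ne_iff.1 hw0
  exact Finset.sum_pos' (fun k _ => mul_nonneg (hB i k).le (hw k))
    ⟨j, Finset.mem_univ j, mul_pos (hB i j) ((hw j).lt_of_ne' hj)⟩

lemma exists_pos_mul_le {κ : Type*} [Finite κ] {x y : κ → ℝ} (hy : ∀ i, 0 < y i) :
    ∃ ε > 0, ∀ i, ε * x i ≤ y i := by
  have h : ∀ i, ∀ᶠ ε in 𝓝[>] (0 : ℝ), ε * x i < y i := fun i =>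
    nhdsWithin_le_nhds <| (continuous_id.mul continuous_const).tendsto' 0 0 (zero_mul _)
      |>.eventually (gt_mem_nhds (hy i))
  obtain ⟨ε, hε, hεpos⟩ := ((eventually_all.2 h).and self_mem_nhdsWithin).exists
  exact ⟨ε, hεpos, fun i => (hε i).le⟩

variable [DecidableEq ι]

lemma pow_succ_apply_pos {C : Matrix ι ι ℝ} (hC : ∀ i j, 0 ≤ C i j) {k : ℕ} {i l j : ι}
    (hk : 0 < (C ^ k) i l) (hl : 0 < C l j) : 0 < (C ^ (k + 1)) i j := by
  rw [pow_succ, mul_apply]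
  exact Finset.sum_pos' (fun q _ => mul_nonneg (pow_apply_nonneg hC k i q) (hC q j))
    ⟨l, Finset.mem_univ l, mul_pos hk hl⟩

lemma exists_pow_pos_of_transGen {C : Matrix ι ι ℝ} (hC : ∀ i j, 0 ≤ C i j)
    (hdiag : ∀ i, 0 < C i i) {r : ι → ι → Prop} (hr : ∀ p q, r p q → 0 < C p q)
    (hconn : ∀ i j, i ≠ j → Relation.TransGen r i j) : ∃ m, ∀ i j, 0 < (C ^ m) i j := by
  have hpath : ∀ i j, ∃ k, 0 < (C ^ k) i j := by
    intro i j
    rcases eq_or_ne i j with rfl | hij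
    · exact ⟨0, by simp⟩
    have h := hconn i j hij
    clear hij
    induction h with
    | single h => exact ⟨1, by simpa using hr _ _ h⟩
    | tail _ h ih =>
      obtain ⟨k, hk⟩ := ih
      exact ⟨k + 1, pow_succ_apply_pos hC hk (hr _ _ h)⟩
  have hev : ∀ i j, ∀ᶠ m in atTop, 0 < (C ^ m) i j := fun i j => by
    obtain ⟨k, hk⟩ := hpath i j
    exact eventually_atTop.2 ⟨k, fun m hm =>
      Nat.le_induction hk (fun m _ h => pow_succ_apply_pos hC h (hdiag j)) m hm⟩
  exact (eventually_all.2 fun i => eventually_all.2 (hev i)).exists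

lemma pow_mulVec_of_mulVec_eq_smul {A : Matrix ι ι ℝ} {w : ι → ℝ} {c : ℝ}
    (h : A *ᵥ w = c • w) (m : ℕ) : (A ^ m) *ᵥ w = c ^ m • w := by
  induction m with
  | zero => simp
  | succ m ih => rw [pow_succ', ← mulVec_mulVec, ih, mulVec_smul, h, smul_smul, pow_succ]

end Positivity

section MMatrix

variable {n : ℕ}

lemma IsZMat.exists_eq_smul_one_sub {Z : Matrix (Fin n) (Fin n) ℝ} (hZ : IsZMat Z) :
    ∃ t : ℝ, 0 ≤ t ∧ ∃ Q : Matrix (Fin n) (Fin n) ℝ, (∀ i j, 0 ≤ Q i j) ∧ Z = t • 1 - Q := by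
  refine ⟨∑ i, |Z i i|, by positivity, (∑ i, |Z i i|) • 1 - Z, fun i j => ?_,
    (sub_sub_cancel _ _).symm⟩
  rcases eq_or_ne i j with rfl | hij
  · have := Finset.single_le_sum (fun k _ => abs_nonneg (Z k k)) (Finset.mem_univ i)
    simp only [Matrix.sub_apply, Matrix.smul_apply, one_apply_eq, smul_eq_mul, mul_one, sub_nonneg]
    exact (le_abs_self _).trans this
  · simpa [one_apply_ne hij] using hZ i j hij

lemma IsMMat.isInvNonneg_add_smul_one {M : Matrix (Fin n) (Fin n) ℝ} (hM : IsMMat M) {ε : ℝ}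
    (hε : 0 < ε) : IsInvNonneg (M + ε • 1) := by
  obtain ⟨s, P, hP, hρ, rfl⟩ := hM
  have hs : 0 ≤ s := (specRad_nonneg P).trans hρ
  rw [show s • 1 - P + ε • 1 = (s + ε) • (1 : Matrix (Fin n) (Fin n) ℝ) - P by module]
  exact isInvNonneg_smul_one_sub hP (by linarith)
    fun μ hμ => (norm_le_specRad hμ).trans_lt (by linarith)

lemma IsMMat.isInvNonneg {M : Matrix (Fin n) (Fin n) ℝ} (hM : IsMMat M) (hdet : IsUnit M.det) :
    IsInvNonneg M := by
  refine ⟨hdet, fun i j => ?_⟩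
  have hinv : ContinuousAt (fun ε : ℝ => (M + ε • 1)⁻¹) 0 := by
    refine ContinuousAt.comp_of_eq (continuousAt_matrix_inv M ?_) (by fun_prop) (by simp)
    rw [Ring.inverse_eq_inv']
    exact continuousAt_inv₀ hdet.ne_zero
  have hlim : Tendsto (fun ε : ℝ => (M + ε • 1)⁻¹ i j) (𝓝[>] 0) (𝓝 (M⁻¹ i j)) := by
    have h := hinv.tendsto.mono_left (nhdsWithin_le_nhds (s := Set.Ioi 0))
    simpa using tendsto_pi_nhds.1 (tendsto_pi_nhds.1 h i) j
  exact ge_of_tendsto hlim (eventually_nhdsWithin_of_forall fun ε hε =>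
    (hM.isInvNonneg_add_smul_one hε).2 i j)

lemma IsMMat.norm_le_of_mem_spectrum {M Q : Matrix (Fin n) (Fin n) ℝ} (hM : IsMMat M)
    (hQ : ∀ i j, 0 ≤ Q i j) {t : ℝ} (hMQ : ∀ i j, M i j ≤ (t • 1 - Q) i j) {μ : ℂ}
    (hμ : μ ∈ spectrum ℂ (Q.map Complex.ofReal)) : ‖μ‖ ≤ t := by
  by_contra! hlt
  obtain ⟨v, hv0, hv⟩ := exists_mulVec_eq_smul_of_mem_spectrum hμ
  have hw : (fun i => ‖v i‖) = 0 :=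
    (hM.isInvNonneg_add_smul_one (sub_pos.2 hlt)).eq_zero_of_mulVec_nonpos
      (fun i => norm_nonneg _) fun i => by
        have := (mulVec_le_mulVec_of_le hMQ (fun j => norm_nonneg _) i).trans
          (smul_one_sub_mulVec_norm_le hQ t hv i)
        rw [add_mulVec, smul_mulVec, one_mulVec, Pi.add_apply, Pi.smul_apply, smul_eq_mul]
        linarith
  exact hv0 (funext fun i => norm_eq_zero.1 (congrFun hw i))

lemma IsMMat.mulVec_eq_zero_of_commute {M B : Matrix (Fin n) (Fin n) ℝ} (hM : IsMMat M)
    (hB : ∀ i j, 0 < B i j) (hBM : Commute B M) {w : Fin n → ℝ} (hw : ∀ i, 0 ≤ w i)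
    (hw0 : w ≠ 0) (hMw : ∀ i, (M *ᵥ w) i ≤ 0) : M *ᵥ w = 0 := by
  by_contra hne
  have hx := mulVec_pos_of_pos hB hw hw0
  have hy := mulVec_pos_of_pos (w := -(M *ᵥ w)) hB (fun i => neg_nonneg.2 (hMw i))
    (neg_ne_zero.2 hne)
  obtain ⟨ε, hε, hεy⟩ := exists_pos_mul_le (x := B *ᵥ w) hy
  -- `M (B w) = B (M w)` is strictly negative, so `(M + ε) (B w) ≤ 0` for small `ε > 0`
  have hBw : B *ᵥ w = 0 :=
    (hM.isInvNonneg_add_smul_one hε).eq_zero_of_mulVec_nonpos (fun i => (hx i).le) fun i => by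
      have := hεy i
      rw [mulVec_neg, mulVec_mulVec, hBM.eq, ← mulVec_mulVec] at this
      rw [add_mulVec, smul_mulVec, one_mulVec, Pi.add_apply, Pi.smul_apply, smul_eq_mul]
      simp only [Pi.neg_apply] at this
      linarith
  obtain ⟨i, -⟩ := Function.ne_iff.1 hw0
  exact (hx i).ne' (congrFun hBw i)

lemma IsMMat.mulVec_eq_zero_and_pos_of_isIrred {M : Matrix (Fin n) (Fin n) ℝ} (hM : IsMMat M)
    (hirr : IsIrred M) {w : Fin n → ℝ} (hw : ∀ i, 0 ≤ w i) (hw0 : w ≠ 0)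
    (hMw : ∀ i, (M *ᵥ w) i ≤ 0) : M *ᵥ w = 0 ∧ ∀ i, 0 < w i := by
  obtain ⟨s, P, hP, -, hMP⟩ := id hM
  have hdiag : ∀ i, 0 < (1 + P) i i := fun i => by
    rw [Matrix.add_apply, one_apply_eq]; linarith [hP i i]
  have hedge : ∀ i j, M i j ≠ 0 → 0 < (1 + P) i j := by
    intro i j hij
    rcases eq_or_ne i j with rfl | hne
    · exact hdiag i
    · have : P i j ≠ 0 := by simpa [hMP, one_apply_ne hne] using hij
      simpa [one_apply_ne hne] using (hP i j).lt_of_ne' this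
  have hC : ∀ i j, 0 ≤ (1 + P) i j := fun i j => by
    rcases eq_or_ne i j with rfl | hne
    · exact (hdiag i).le
    · simpa [one_apply_ne hne] using hP i j
  obtain ⟨m, hB⟩ := exists_pow_pos_of_transGen hC hdiag hedge hirr
  have hBM : Commute ((1 + P) ^ m) M := by
    rw [hMP]
    exact ((Commute.one_right _).smul_right s).sub_right
      (((Commute.one_left P).add_left (Commute.refl P)).pow_left m)
  have hMw0 := hM.mulVec_eq_zero_of_commute hB hBM hw hw0 hMw
  refine ⟨hMw0, fun i => ?_⟩
  have hPw : (1 + P) *ᵥ w = (1 + s) • w := by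
    have : s • w - P *ᵥ w = 0 := by rw [← hMw0, hMP, sub_mulVec, smul_mulVec, one_mulVec]
    rw [add_mulVec, one_mulVec, add_smul, one_smul, sub_eq_zero.1 this]
  have hBw := mulVec_pos_of_pos hB hw hw0 i
  rw [pow_mulVec_of_mulVec_eq_smul hPw, Pi.smul_apply, smul_eq_mul] at hBw
  exact (hw i).lt_of_ne fun h => by simp [← h] at hBw

end MMatrix

/-- If `M` is an M-matrix and `Z` is a Z-matrix with `Z ≥ M` entrywise, and moreover
either `M` is nonsingular, or `M` is irreducible and `Z ≠ M`, then `Z` is a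
nonsingular M-matrix. -/
theorem zmat_above_mmat_nonsingular {n : ℕ} (M Z : Matrix (Fin n) (Fin n) ℝ)
    (hM : IsMMat M) (hZ : IsZMat Z) (hge : ∀ i j, M i j ≤ Z i j)
    (hextra : IsUnit M.det ∨ (IsIrred M ∧ Z ≠ M)) :
    IsNsMMat Z := by
  obtain ⟨t, ht, Q, hQ, rfl⟩ := hZ.exists_eq_smul_one_sub
  refine ⟨⟨t, Q, hQ, specRad_le ht fun μ hμ => hM.norm_le_of_mem_spectrum hQ hge hμ, rfl⟩, ?_⟩
  by_contra hdet
  obtain ⟨v, hv0, hv⟩ :=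
    exists_mulVec_eq_smul_of_mem_spectrum (ofReal_mem_spectrum_of_not_isUnit_det hdet)
  set w : Fin n → ℝ := fun i => ‖v i‖
  have hw : ∀ i, 0 ≤ w i := fun i => norm_nonneg _
  have hw0 : w ≠ 0 := fun h => hv0 (funext fun i => norm_eq_zero.1 (congrFun h i))
  have hZw : ∀ i, ((t • 1 - Q) *ᵥ w) i ≤ 0 := fun i => by
    simpa [abs_of_nonneg ht] using smul_one_sub_mulVec_norm_le hQ t hv i
  have hMw : ∀ i, (M *ᵥ w) i ≤ 0 := fun i => (mulVec_le_mulVec_of_le hge hw i).trans (hZw i)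
  rcases hextra with hMdet | ⟨hirr, hne⟩
  · exact hw0 ((hM.isInvNonneg hMdet).eq_zero_of_mulVec_nonpos hw hMw)
  · obtain ⟨hMw0, hwpos⟩ := hM.mulVec_eq_zero_and_pos_of_isIrred hirr hw hw0 hMw
    refine hne (eq_of_le_of_mulVec_eq hge hwpos (funext fun i => ?_)).symm
    have hMwi : (M *ᵥ w) i = 0 := congrFun hMw0 i
    linarith [hZw i, mulVec_le_mulVec_of_le hge hw i]
end

section
/- Let A be an m₁×m₁ nonsingular matrix with A⁻¹ ≥ 0, D an m₂×m₂ matrix, B an m₁×m₂ matrix with B ≥ 0, and C an m₂×m₁ matrix with C ≥ 0. Suppose there exist vectors v₁ ∈ ℝ^{m₂}, v₂ ∈ ℝ^{m₁} with v₁ > 0, v₂ > 0 such that u₂ := Av₂ − Bv₁ ≥ 0 and Dv₁ − Cv₂ ≥ 0. If X, X' are m₁×m₂ matrices with 0 ≤ X ≤ X', X v₁ ≤ v₂ − A⁻¹u₂, and A X' + X' D = B + X C X, then X' v₁ ≤ v₂ − A⁻¹u₂. -/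
/-!
The bound `v₂ - A⁻¹ u₂` equals `A⁻¹ B v₁`, so since `A⁻¹ ≥ 0` it suffices to show
`A X' v₁ ≤ B v₁`. Applying the iteration to `v₁` gives
`A X' v₁ = B v₁ + X C X v₁ - X' D v₁`, and entrywise monotonicity yields
`X C X v₁ ≤ X C v₂ ≤ X' C v₂ ≤ X' D v₁`, where `X v₁ ≤ v₂` because `A⁻¹ u₂ ≥ 0`.
-/

open Matrix

namespace Matrix

section OrderedSemiring

variable {R m n : Type*} [Semiring R] [PartialOrder R] [IsOrderedRing R] [Fintype n]

lemma mulVec_nonneg_of_nonneg {M : Matrix m n R} (hM : ∀ i j, 0 ≤ M i j) {x : n → R}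
    (hx : 0 ≤ x) : 0 ≤ M *ᵥ x :=
  fun i => dotProduct_nonneg_of_nonneg (fun j => hM i j) hx

lemma mulVec_le_mulVec_of_nonneg {M : Matrix m n R} (hM : ∀ i j, 0 ≤ M i j) {x y : n → R}
    (hxy : x ≤ y) : M *ᵥ x ≤ M *ᵥ y :=
  fun i => dotProduct_le_dotProduct_of_nonneg_left hxy (fun j => hM i j)

lemma mulVec_le_mulVec_of_le {M N : Matrix m n R} (hMN : ∀ i j, M i j ≤ N i j) {x : n → R}
    (hx : 0 ≤ x) : M *ᵥ x ≤ N *ᵥ x :=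
  fun i => dotProduct_le_dotProduct_of_nonneg_right (fun j => hMN i j) hx

end OrderedSemiring

section Inverse

variable {R n : Type*} [CommRing R] [Fintype n] [DecidableEq n]

lemma sub_inv_mulVec_sub_mulVec {A : Matrix n n R} (hA : IsUnit A.det) (v w : n → R) :
    v - A⁻¹ *ᵥ (A *ᵥ v - w) = A⁻¹ *ᵥ w := by
  rw [mulVec_sub, mulVec_mulVec, nonsing_inv_mul A hA, one_mulVec, sub_sub_cancel]

lemma le_inv_mulVec_of_mulVec_le [PartialOrder R] [IsOrderedRing R] {A : Matrix n n R}
    (hA : IsUnit A.det) (hAinv : ∀ i j, 0 ≤ A⁻¹ i j) {x w : n → R} (hxw : A *ᵥ x ≤ w) :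
    x ≤ A⁻¹ *ᵥ w :=
  calc x = A⁻¹ *ᵥ (A *ᵥ x) := by rw [mulVec_mulVec, nonsing_inv_mul A hA, one_mulVec]
    _ ≤ A⁻¹ *ᵥ w := mulVec_le_mulVec_of_nonneg hAinv hxw

end Inverse

end Matrix

theorem nare_iterate_bounded_general {m₁ m₂ : ℕ}
    (A : Matrix (Fin m₁) (Fin m₁) ℝ) (D : Matrix (Fin m₂) (Fin m₂) ℝ)
    (B : Matrix (Fin m₁) (Fin m₂) ℝ) (C : Matrix (Fin m₂) (Fin m₁) ℝ)
    (hA : IsUnit A.det) (hAinv : ∀ i j, 0 ≤ A⁻¹ i j)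
    (hC : ∀ i j, 0 ≤ C i j)
    (v₁ : Fin m₂ → ℝ) (v₂ : Fin m₁ → ℝ)
    (hv₂ : ∀ i, 0 < v₂ i)
    (hu₂ : 0 ≤ A *ᵥ v₂ - B *ᵥ v₁) (hu₁ : 0 ≤ D *ᵥ v₁ - C *ᵥ v₂)
    (X X' : Matrix (Fin m₁) (Fin m₂) ℝ)
    (hX : ∀ i j, 0 ≤ X i j) (hXX' : ∀ i j, X i j ≤ X' i j)
    (hbound : X *ᵥ v₁ ≤ v₂ - A⁻¹ *ᵥ (A *ᵥ v₂ - B *ᵥ v₁))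
    (heq : A * X' + X' * D = B + X * C * X) :
    X' *ᵥ v₁ ≤ v₂ - A⁻¹ *ᵥ (A *ᵥ v₂ - B *ᵥ v₁) := by
  have hXv₁ : X *ᵥ v₁ ≤ v₂ :=
    hbound.trans (sub_le_self _ (mulVec_nonneg_of_nonneg hAinv hu₂))
  have hX' : ∀ i j, 0 ≤ X' i j := fun i j => (hX i j).trans (hXX' i j)
  have hquad : X *ᵥ (C *ᵥ (X *ᵥ v₁)) ≤ X' *ᵥ (D *ᵥ v₁) :=
    calc X *ᵥ (C *ᵥ (X *ᵥ v₁)) ≤ X *ᵥ (C *ᵥ v₂) :=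
          mulVec_le_mulVec_of_nonneg hX (mulVec_le_mulVec_of_nonneg hC hXv₁)
      _ ≤ X' *ᵥ (C *ᵥ v₂) :=
          mulVec_le_mulVec_of_le hXX' (mulVec_nonneg_of_nonneg hC fun i => (hv₂ i).le)
      _ ≤ X' *ᵥ (D *ᵥ v₁) := mulVec_le_mulVec_of_nonneg hX' (sub_nonneg.mp hu₁)
  have heqv :
      A *ᵥ (X' *ᵥ v₁) + X' *ᵥ (D *ᵥ v₁) = B *ᵥ v₁ + X *ᵥ (C *ᵥ (X *ᵥ v₁)) := by
    simpa only [add_mulVec, ← mulVec_mulVec] using congrArg (· *ᵥ v₁) heq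
  rw [sub_inv_mulVec_sub_mulVec hA]
  refine le_inv_mulVec_of_mulVec_le hA hAinv
    (le_of_add_le_add_right (a := X' *ᵥ (D *ᵥ v₁)) ?_)
  rw [heqv]
  exact add_le_add_right hquad _

/-- Induction step for the fixed-point iteration
`A X_{k+1} + X_{k+1} D = B + X_k C X_k` of the nonsymmetric algebraic Riccati
equation: if `0 ≤ X ≤ X'` entrywise, `X v₁ ≤ v₂ - A⁻¹ u₂` where
`u₂ = A v₂ - B v₁ ≥ 0` and `D v₁ - C v₂ ≥ 0` with `v₁, v₂ > 0`, `A⁻¹ ≥ 0`,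
`B, C ≥ 0`, and `A X' + X' D = B + X C X`, then `X' v₁ ≤ v₂ - A⁻¹ u₂`. -/
theorem nare_iterate_bounded {m₁ m₂ : ℕ}
    (A : Matrix (Fin m₁) (Fin m₁) ℝ) (D : Matrix (Fin m₂) (Fin m₂) ℝ)
    (B : Matrix (Fin m₁) (Fin m₂) ℝ) (C : Matrix (Fin m₂) (Fin m₁) ℝ)
    (hA : IsUnit A.det) (hAinv : ∀ i j, 0 ≤ A⁻¹ i j)
    (hB : ∀ i j, 0 ≤ B i j) (hC : ∀ i j, 0 ≤ C i j)
    (v₁ : Fin m₂ → ℝ) (v₂ : Fin m₁ → ℝ)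
    (hv₁ : ∀ i, 0 < v₁ i) (hv₂ : ∀ i, 0 < v₂ i)
    (hu₂ : 0 ≤ A *ᵥ v₂ - B *ᵥ v₁) (hu₁ : 0 ≤ D *ᵥ v₁ - C *ᵥ v₂)
    (X X' : Matrix (Fin m₁) (Fin m₂) ℝ)
    (hX : ∀ i j, 0 ≤ X i j) (hXX' : ∀ i j, X i j ≤ X' i j)
    (hbound : X *ᵥ v₁ ≤ v₂ - A⁻¹ *ᵥ (A *ᵥ v₂ - B *ᵥ v₁))
    (heq : A * X' + X' * D = B + X * C * X) :
    X' *ᵥ v₁ ≤ v₂ - A⁻¹ *ᵥ (A *ᵥ v₂ - B *ᵥ v₁) :=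
  nare_iterate_bounded_general A D B C hA hAinv hC v₁ v₂ hv₂ hu₂ hu₁ X X' hX hXX' hbound heq
end
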